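/- Let N ≥ 2 and consider the quotient ring G = ℚ[x,y] / (h_{N−1}(x,y), h_N(x,y)) (a model for H*(Gr(2,N); ℚ) after adjoining the Chern roots). Let (a,b) and (c,d) be pairs with N−2 ≥ a ≥ b ≥ 0, N−2 ≥ c ≥ d ≥ 0 and a+b+c+d = 2(N−2). Then in G: π_{a,b}·π_{c,d} = π_{N−2,N−2} if (c,d) = (N−2−b, N−2−a), and π_{a,b}·π_{c,d} = 0 otherwise. (This duality underlies the double-facet sphere relation S₂ and the neck cutting relation NC₂ for sl(N) foams.) -/

import Mathlib

/-!
Expanding by the Pieri rule, `π_{a,b} π_{c,d} = ∑_{m=b+d}^{min(a+d, b+c)} π_{S-m,m}` with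
`S = a+b+c+d = 2(N-2)`. By the Jacobi–Trudi identity `π_{k,m} = h_k h_m - h_{k+1} h_{m-1}`, and
since the recurrence `h_{j+2} = (x+y) h_{j+1} - xy h_j` puts every `h_j` with `j ≥ N-1` into the
ideal, each `π_{k,m}` with `k ≥ N-1` vanishes in `G`. So only the middle term `m = N-2` survives,
and it occurs in the Pieri sum exactly when `a + d = b + c = N-2`.
-/

open MvPolynomial

/-- The complete homogeneous symmetric polynomial of degree `j` in two variables. -/
noncomputable def hpoly (j : ℕ) : MvPolynomial (Fin 2) ℚ :=
  ∑ p ∈ Finset.HasAntidiagonal.antidiagonal j, X 0 ^ p.1 * X 1 ^ p.2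

/-- The two-variable Schur polynomial `π_{k,m}(x,y) = ∑_{i=m}^k x^i y^{k+m-i}`. -/
noncomputable def pitwo (k m : ℕ) : MvPolynomial (Fin 2) ℚ :=
  ∑ i ∈ Finset.Icc m k, X 0 ^ i * X 1 ^ (k + m - i)

open Finset

lemma hpoly_zero : hpoly 0 = 1 := by
  simp [hpoly]

lemma hpoly_succ (j : ℕ) : hpoly (j + 1) = X 0 * hpoly j + X 1 ^ (j + 1) := by
  rw [hpoly, hpoly, Nat.sum_antidiagonal_succ, mul_sum, add_comm]
  simp only [pow_succ', pow_zero, one_mul, mul_assoc]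

lemma hpoly_one : hpoly 1 = X 0 + X 1 := by
  simp [hpoly_succ 0, hpoly_zero]

lemma hpoly_add_two (j : ℕ) :
    hpoly (j + 2) = (X 0 + X 1) * hpoly (j + 1) - X 0 * X 1 * hpoly j := by
  linear_combination hpoly_succ (j + 1) - X 1 * hpoly_succ j

lemma pitwo_eq_mul_hpoly {k m : ℕ} (h : m ≤ k) :
    pitwo k m = (X 0 * X 1) ^ m * hpoly (k - m) := by
  rw [pitwo, hpoly, Nat.sum_antidiagonal_eq_sum_range_succ_mk, mul_sum,
    ← Ico_add_one_right_eq_Icc, sum_Ico_eq_sum_range, show k + 1 - m = k - m + 1 by omega]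
  refine sum_congr rfl fun i hi => ?_
  rw [mem_range] at hi
  dsimp only
  rw [show k + m - (m + i) = m + (k - m - i) by omega]
  ring

lemma hpoly_mul_sub_hpoly_mul (n m : ℕ) :
    hpoly (n + m + 1) * hpoly (m + 1) - hpoly (n + m + 2) * hpoly m
      = (X 0 * X 1) ^ (m + 1) * hpoly n := by
  induction m with
  | zero =>
    rw [hpoly_one, hpoly_zero, add_zero, hpoly_add_two]
    ring
  | succ m ih =>
    linear_combination hpoly (n + m + 2) * hpoly_add_two m
      - hpoly (m + 1) * hpoly_add_two (n + m + 1) + X 0 * X 1 * ih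

lemma pitwo_eq_hpoly_det {k m : ℕ} (hm : 1 ≤ m) (hmk : m ≤ k) :
    pitwo k m = hpoly k * hpoly m - hpoly (k + 1) * hpoly (m - 1) := by
  obtain ⟨m, rfl⟩ := Nat.exists_eq_add_of_le' hm
  obtain ⟨n, rfl⟩ := Nat.exists_eq_add_of_le' hmk
  rw [pitwo_eq_mul_hpoly hmk, Nat.add_sub_cancel, Nat.add_sub_cancel,
    ← hpoly_mul_sub_hpoly_mul n m]
  ring_nf

lemma hpoly_mem_span_of_le {n j : ℕ} (h : n ≤ j) :
    hpoly j ∈ Ideal.span {hpoly n, hpoly (n + 1)} := by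
  set I := Ideal.span {hpoly n, hpoly (n + 1)}
  have hpair : ∀ t, hpoly (n + t) ∈ I ∧ hpoly (n + t + 1) ∈ I := by
    intro t
    induction t with
    | zero => exact ⟨Ideal.subset_span (by simp), Ideal.subset_span (by simp)⟩
    | succ t ih =>
      refine ⟨ih.2, ?_⟩
      rw [show n + (t + 1) + 1 = n + t + 2 by ring, hpoly_add_two]
      exact I.sub_mem (I.mul_mem_left _ ih.2) (I.mul_mem_left _ ih.1)
  obtain ⟨t, rfl⟩ := Nat.exists_eq_add_of_le h
  exact (hpair t).1

lemma pitwo_mem_span_of_le {n k m : ℕ} (hmk : m ≤ k) (hnk : n ≤ k) :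
    pitwo k m ∈ Ideal.span {hpoly n, hpoly (n + 1)} := by
  rcases Nat.eq_zero_or_pos m with rfl | hm
  · simpa [pitwo_eq_mul_hpoly hmk] using hpoly_mem_span_of_le hnk
  · rw [pitwo_eq_hpoly_det hm hmk]
    exact Ideal.sub_mem _ (Ideal.mul_mem_right _ _ (hpoly_mem_span_of_le hnk))
      (Ideal.mul_mem_right _ _ (hpoly_mem_span_of_le (by omega)))

lemma pitwo_mul_pitwo (a b c d : ℕ) :
    pitwo a b * pitwo c d =
      ∑ m ∈ Icc (b + d) (min (a + d) (b + c)), pitwo (a + b + c + d - m) m := by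
  simp only [pitwo, sum_mul_sum, ← sum_product', sum_sigma']
  -- Both sides are sums of monomials `x^n y^(a+b+c+d-n)`: a pair `(i, j)` with `i + j = n` is
  -- matched with the layer `m = min (i + d) (b + c + d - j)` of the right-hand side.
  refine sum_nbij'
    (fun p => ⟨min (p.1 + d) (b + c + d - p.2), p.1 + p.2⟩)
    (fun q => if q.2 ≤ b + c then (q.1 - d, q.2 + d - q.1)
      else (q.2 + q.1 - (b + c + d), b + c + d - q.1)) ?_ ?_ ?_ ?_ ?_
  · rintro ⟨i, j⟩ hij
    simp only [mem_product, mem_Icc, mem_sigma] at hij ⊢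
    omega
  · rintro ⟨m, n⟩ hmn
    simp only [mem_product, mem_Icc, mem_sigma] at hmn ⊢
    split_ifs <;> omega
  · rintro ⟨i, j⟩ hij
    simp only [mem_product, mem_Icc] at hij
    dsimp only
    split_ifs <;> ext <;> dsimp only <;> omega
  · rintro ⟨m, n⟩ hmn
    simp only [mem_sigma, mem_Icc] at hmn
    dsimp only
    split_ifs <;> simp only [Sigma.mk.injEq, heq_eq_eq] <;> omega
  · rintro ⟨i, j⟩ hij
    simp only [mem_product, mem_Icc] at hij
    rw [show a + b + c + d - min (i + d) (b + c + d - j) + min (i + d) (b + c + d - j) - (i + j)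
        = a + b - i + (c + d - j) by omega]
    ring

theorem grassmannian_duality_general (N : ℕ) (hN : 2 ≤ N) (a b c d : ℕ)
    (hba : b ≤ a)
    (hsum : a + b + c + d = 2 * (N - 2)) :
    Ideal.Quotient.mk (Ideal.span {hpoly (N - 1), hpoly N}) (pitwo a b * pitwo c d)
      = if c = N - 2 - b ∧ d = N - 2 - a then
          Ideal.Quotient.mk (Ideal.span {hpoly (N - 1), hpoly N})
            (pitwo (N - 2) (N - 2))
        else 0 := by
  obtain ⟨n, rfl⟩ := Nat.exists_eq_add_of_le' hN
  rw [show n + 2 - 1 = n + 1 by omega, show n + 2 - 2 = n by omega] at *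
  set I := Ideal.span {hpoly (n + 1), hpoly (n + 2)}
  have hterm : ∀ m ∈ Icc (b + d) (min (a + d) (b + c)),
      Ideal.Quotient.mk I (pitwo (a + b + c + d - m) m)
        = if n = m then Ideal.Quotient.mk I (pitwo n n) else 0 := by
    intro m hm
    rw [mem_Icc] at hm
    split_ifs with hnm
    · rw [← hnm, show a + b + c + d - n = n by omega]
    · exact Ideal.Quotient.eq_zero_iff_mem.2 (pitwo_mem_span_of_le (by omega) (by omega))
  rw [pitwo_mul_pitwo, map_sum, sum_congr rfl hterm, sum_ite_eq]
  exact if_congr (by rw [mem_Icc]; omega) rfl rfl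

/-- Duality in `G = ℚ[x,y]/(h_{N−1}, h_N)` (a model of `H*(Gr(2,N))`): for
`N−2 ≥ a ≥ b ≥ 0`, `N−2 ≥ c ≥ d ≥ 0` with `a+b+c+d = 2(N−2)`,
`π_{a,b}·π_{c,d}` equals `π_{N−2,N−2}` if `(c,d) = (N−2−b, N−2−a)` and is `0`
otherwise (sphere relation S₂ and neck cutting NC₂). -/
theorem grassmannian_duality (N : ℕ) (hN : 2 ≤ N) (a b c d : ℕ)
    (hba : b ≤ a) (ha : a ≤ N - 2) (hdc : d ≤ c) (hc : c ≤ N - 2)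
    (hsum : a + b + c + d = 2 * (N - 2)) :
    Ideal.Quotient.mk (Ideal.span {hpoly (N - 1), hpoly N}) (pitwo a b * pitwo c d)
      = if c = N - 2 - b ∧ d = N - 2 - a then
          Ideal.Quotient.mk (Ideal.span {hpoly (N - 1), hpoly N})
            (pitwo (N - 2) (N - 2))
        else 0 :=
  grassmannian_duality_general N hN a b c d hba hsum
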